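/- arXiv:2401.17817 — 3 statements merged into one kernel-verified Lean document; each statement's English description precedes it below -/
import Mathlib

section
/- Let D be a multipartite tournament and let u and v be two non-sink vertices belonging to the same partite set of D. Then u and v do not (1,2)-compete in D if and only if N⁺(u) ∪ N⁺(v) ⊆ X for some partite set X of D. -/
/-- Adjacency in the (1,2)-step competition graph `C_{1,2}(D)` of the (simple) digraph `D`
with arc relation `A`: there is a vertex `w` distinct from `u` and `v` such that either
(`d_{D-v}(u,w) ≤ 1` and `d_{D-u}(v,w) ≤ 2`) or (`d_{D-u}(v,w) ≤ 1` and `d_{D-v}(u,w) ≤ 2`). -/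
def CompAdj {V : Type*} (A : V → V → Prop) (u v : V) : Prop :=
  u ≠ v ∧ ∃ w, w ≠ u ∧ w ≠ v ∧
    ((A u w ∧ (A v w ∨ ∃ z, z ≠ u ∧ A v z ∧ A z w)) ∨
     (A v w ∧ (A u w ∨ ∃ z, z ≠ v ∧ A u z ∧ A z w)))

/-- The (1,2)-step competition graph `C_{1,2}(D)` of the digraph with arc relation `A`. -/
def compGraph {V : Type*} (A : V → V → Prop) : SimpleGraph V where
  Adj := CompAdj A
  symm := ⟨by
    rintro u v ⟨hne, w, h1, h2, h3⟩
    exact ⟨hne.symm, w, h2, h1, h3.symm⟩⟩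
  loopless := ⟨by rintro u ⟨hne, -⟩; exact hne rfl⟩

/-- Vertices `u` and `v` `(1,2)`-compete in the digraph with arc relation `A`: there is a
vertex `w` distinct from `u` and `v` such that either (`u → w` and there is a directed path
of length 2 from `v` to `w` not traversing `u`) or vice versa. -/
def OneTwoCompete {V : Type*} (A : V → V → Prop) (u v : V) : Prop :=
  ∃ w, w ≠ u ∧ w ≠ v ∧
    ((A u w ∧ ∃ z, z ≠ u ∧ A v z ∧ A z w) ∨
     (A v w ∧ ∃ z, z ≠ v ∧ A u z ∧ A z w))

/-- `A` is an orientation of the complete multipartite graph whose parts are the fibres of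
`p : V → ι`: no arcs within a part, and exactly one arc between any two vertices in
different parts. -/
def IsCompleteMultipartiteOrientation {V ι : Type*} (A : V → V → Prop) (p : V → ι) : Prop :=
  (∀ u v : V, p u = p v → ¬ A u v) ∧
  ∀ u v : V, p u ≠ p v → (A u v ∨ A v u) ∧ ¬ (A u v ∧ A v u)

/-- A multipartite tournament: an orientation of a complete `k`-partite graph with `k ≥ 3`,
whose partite sets are the (nonempty) fibres of `p : V → ι`. -/
def IsMultipartiteTournament {V ι : Type*} [Fintype ι] (A : V → V → Prop) (p : V → ι) : Prop :=
  Function.Surjective p ∧ 3 ≤ Fintype.card ι ∧ IsCompleteMultipartiteOrientation A p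

/-- A multipartite tournament is tight if every partite set is a clique in `C_{1,2}(D)`. -/
def IsTight {V ι : Type*} (A : V → V → Prop) (p : V → ι) : Prop :=
  ∀ u v : V, u ≠ v → p u = p v → CompAdj A u v

/-- A tournament: an orientation of a complete graph. -/
def IsTournament {V : Type*} (A : V → V → Prop) : Prop :=
  (∀ u, ¬ A u u) ∧ ∀ u v : V, u ≠ v → (A u v ∨ A v u) ∧ ¬ (A u v ∧ A v u)

/-
If `u → w` and `v → x` with `w`, `x` in different parts, the arc between `w` and `x` is
either `x → w`, giving `v → x → w` against `u → w`, or `w → x`, giving `u → w → x` against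
`v → x`. So without competition all out-neighbours of `u` and `v` lie in one part; conversely,
a path `v → z → w` with `u → z`, `u → w` would join two vertices of that part.
-/

section OneTwoCompete

variable {V ι : Type*} {A : V → V → Prop} {p : V → ι}

theorem OneTwoCompete.symm {u v : V} (h : OneTwoCompete A u v) : OneTwoCompete A v u := by
  obtain ⟨w, hwu, hwv, hw⟩ := h
  exact ⟨w, hwv, hwu, hw.symm⟩

theorem IsCompleteMultipartiteOrientation.part_eq_of_not_oneTwoCompete
    (hD : IsCompleteMultipartiteOrientation A p) {u v w x : V} (hsame : p u = p v)
    (huw : A u w) (hvx : A v x) (hnc : ¬ OneTwoCompete A u v) : p x = p w := by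
  obtain ⟨hintra, harc⟩ := hD
  by_contra hxw
  have hpuw : p u ≠ p w := fun h => hintra u w h huw
  have hpvx : p v ≠ p x := fun h => hintra v x h hvx
  have hwu : w ≠ u := fun h => hpuw (congrArg p h).symm
  have hwv : w ≠ v := fun h => hpuw (hsame.trans (congrArg p h).symm)
  have hxv : x ≠ v := fun h => hpvx (congrArg p h).symm
  have hxu : x ≠ u := fun h => hpvx (hsame.symm.trans (congrArg p h).symm)
  rcases (harc x w hxw).1 with hxw' | hwx'
  · exact hnc ⟨w, hwu, hwv, Or.inl ⟨huw, x, hxu, hvx, hxw'⟩⟩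
  · exact hnc ⟨x, hxu, hxv, Or.inr ⟨hvx, w, hwv, huw, hwx'⟩⟩

theorem IsCompleteMultipartiteOrientation.not_oneTwoCompete_of_outNeighbors_subset
    (hD : IsCompleteMultipartiteOrientation A p) {u v : V} {i : ι}
    (hsub : {w | A u w} ∪ {w | A v w} ⊆ {w | p w = i}) : ¬ OneTwoCompete A u v := by
  rintro ⟨w, -, -, ⟨huw, z, -, hvz, hzw⟩ | ⟨hvw, z, -, huz, hzw⟩⟩
  · exact hD.1 z w ((hsub (Or.inr hvz)).trans (hsub (Or.inl huw)).symm) hzw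
  · exact hD.1 z w ((hsub (Or.inl huz)).trans (hsub (Or.inr hvw)).symm) hzw

end OneTwoCompete

theorem stmt0_general {V ι : Type*} [Fintype ι]
    (A : V → V → Prop) (p : V → ι) (hD : IsMultipartiteTournament A p)
    (u v : V) (hsame : p u = p v)
    (hu : ∃ w, A u w) (hv : ∃ w, A v w) :
    ¬ OneTwoCompete A u v ↔
      ∃ i : ι, {w | A u w} ∪ {w | A v w} ⊆ {w | p w = i} := by
  have hD := hD.2.2
  refine ⟨fun hnc => ?_, fun ⟨i, hsub⟩ => hD.not_oneTwoCompete_of_outNeighbors_subset hsub⟩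
  obtain ⟨w, huw⟩ := hu
  obtain ⟨y, hvy⟩ := hv
  have hv_part : ∀ x, A v x → p x = p w := fun x hvx =>
    hD.part_eq_of_not_oneTwoCompete hsame huw hvx hnc
  have hu_part : ∀ x, A u x → p x = p y := fun x hux =>
    hD.part_eq_of_not_oneTwoCompete hsame.symm hvy hux (mt OneTwoCompete.symm hnc)
  refine ⟨p w, ?_⟩
  rintro x (hux | hvx)
  · exact (hu_part x hux).trans (hv_part y hvy)
  · exact hv_part x hvx

/-- Let `D` be a multipartite tournament and let `u` and `v` be two non-sink
vertices belonging to the same partite set of `D`. Then `u` and `v` do not `(1,2)`-compete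
in `D` if and only if `N⁺(u) ∪ N⁺(v) ⊆ X` for some partite set `X` of `D`. -/
theorem stmt0 {V ι : Type*} [Fintype V] [Fintype ι]
    (A : V → V → Prop) (p : V → ι) (hD : IsMultipartiteTournament A p)
    (u v : V) (huv : u ≠ v) (hsame : p u = p v)
    (hu : ∃ w, A u w) (hv : ∃ w, A v w) :
    ¬ OneTwoCompete A u v ↔
      ∃ i : ι, {w | A u w} ∪ {w | A v w} ⊆ {w | p w = i} :=
  stmt0_general A p hD u v hsame hu hv
end

section
/- Let D be a multipartite tournament and let u and v be two non-sink vertices belonging to the same partite set of D. Then u and v are not adjacent in the (1,2)-step competition graph C_{1,2}(D) if and only if N⁺(u) ∩ N⁺(v) = ∅ and N⁺(u) ∪ N⁺(v) ⊆ X for some partite set X of D. -/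
/-!
Two vertices `u`, `v` of one partite set have no arc between them, and none of their
out-neighbours lies in their own part. A common out-neighbour makes them adjacent in
`C_{1,2}(D)`, and so does a pair of out-neighbours `u → a`, `v → b` in different parts: the arc
between `a` and `b` closes a path of length two from one of `u`, `v` to an out-neighbour of the
other. Conversely, if the out-neighbourhoods are disjoint and lie in one part, no arc joins an
out-neighbour to a second out-neighbour, so no such path exists.
-/

theorem CompAdj.of_common_outNeighbor {V : Type*} {A : V → V → Prop} {u v w : V}
    (huv : u ≠ v) (hwu : w ≠ u) (hwv : w ≠ v) (huw : A u w) (hvw : A v w) : CompAdj A u v :=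
  ⟨huv, w, hwu, hwv, Or.inl ⟨huw, Or.inl hvw⟩⟩

theorem CompAdj.of_path_two {V : Type*} {A : V → V → Prop} {u v w z : V}
    (huv : u ≠ v) (hwu : w ≠ u) (hwv : w ≠ v) (hzu : z ≠ u)
    (huw : A u w) (hvz : A v z) (hzw : A z w) : CompAdj A u v :=
  ⟨huv, w, hwu, hwv, Or.inl ⟨huw, Or.inr ⟨z, hzu, hvz, hzw⟩⟩⟩

theorem not_compAdj_of_outNeighbors_disjoint_of_subset_part {V ι : Type*}
    {A : V → V → Prop} {p : V → ι} (hno : ∀ a b, p a = p b → ¬ A a b) {u v : V} {i : ι}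
    (hdisj : {w | A u w} ∩ {w | A v w} = ∅)
    (hsub : {w | A u w} ∪ {w | A v w} ⊆ {w | p w = i}) :
    ¬ CompAdj A u v := by
  have hpart : ∀ {x}, A u x ∨ A v x → p x = i := fun hx => hsub hx
  have hcommon : ∀ {w}, A u w → A v w → False := fun huw hvw =>
    (Set.eq_empty_iff_forall_notMem.1 hdisj) _ ⟨huw, hvw⟩
  rintro ⟨-, w, -, -, ⟨huw, hvw | ⟨z, -, hvz, hzw⟩⟩ | ⟨hvw, huw | ⟨z, -, huz, hzw⟩⟩⟩
  · exact hcommon huw hvw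
  · exact hno z w ((hpart (Or.inr hvz)).trans (hpart (Or.inl huw)).symm) hzw
  · exact hcommon huw hvw
  · exact hno z w ((hpart (Or.inl huz)).trans (hpart (Or.inr hvw)).symm) hzw

namespace IsCompleteMultipartiteOrientation

variable {V ι : Type*} {A : V → V → Prop} {p : V → ι}

theorem part_ne_of_arc (hD : IsCompleteMultipartiteOrientation A p) {a b : V} (h : A a b) :
    p a ≠ p b :=
  fun hp => hD.1 a b hp h

theorem ne_of_arc_of_part_eq (hD : IsCompleteMultipartiteOrientation A p) {a b c : V}
    (h : A a b) (hac : p a = p c) : b ≠ c := by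
  rintro rfl
  exact hD.part_ne_of_arc h hac

theorem compAdj_of_common_outNeighbor (hD : IsCompleteMultipartiteOrientation A p)
    {u v w : V} (huv : u ≠ v) (hsame : p u = p v) (huw : A u w) (hvw : A v w) :
    CompAdj A u v :=
  .of_common_outNeighbor huv (hD.ne_of_arc_of_part_eq huw rfl)
    (hD.ne_of_arc_of_part_eq huw hsame) huw hvw

theorem compAdj_of_outNeighbors_part_ne (hD : IsCompleteMultipartiteOrientation A p)
    {u v a b : V} (huv : u ≠ v) (hsame : p u = p v) (hua : A u a) (hvb : A v b)
    (hab : p a ≠ p b) : CompAdj A u v := by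
  have hau : a ≠ u := hD.ne_of_arc_of_part_eq hua rfl
  have hav : a ≠ v := hD.ne_of_arc_of_part_eq hua hsame
  have hbu : b ≠ u := hD.ne_of_arc_of_part_eq hvb hsame.symm
  have hbv : b ≠ v := hD.ne_of_arc_of_part_eq hvb rfl
  rcases (hD.2 a b hab).1 with hab' | hba
  · exact (compGraph A).adj_symm (CompAdj.of_path_two huv.symm hbv hbu hav hvb hua hab')
  · exact .of_path_two huv hau hav hbu hua hvb hba

end IsCompleteMultipartiteOrientation

theorem stmt1_general {V ι : Type*} [Fintype ι]
    (A : V → V → Prop) (p : V → ι) (hD : IsMultipartiteTournament A p)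
    (u v : V) (huv : u ≠ v) (hsame : p u = p v)
    (hu : ∃ w, A u w) (hv : ∃ w, A v w) :
    ¬ (compGraph A).Adj u v ↔
      ({w | A u w} ∩ {w | A v w} = ∅ ∧
       ∃ i : ι, {w | A u w} ∪ {w | A v w} ⊆ {w | p w = i}) := by
  obtain ⟨-, -, hD⟩ := hD
  constructor
  · intro hadj
    obtain ⟨a, hua⟩ := hu
    obtain ⟨b, hvb⟩ := hv
    have hpart : ∀ {x y}, A u x → A v y → p x = p y := fun hux hvy =>
      not_not.1 fun hxy => hadj (hD.compAdj_of_outNeighbors_part_ne huv hsame hux hvy hxy)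
    refine ⟨Set.eq_empty_iff_forall_notMem.2 fun w ⟨huw, hvw⟩ =>
      hadj (hD.compAdj_of_common_outNeighbor huv hsame huw hvw), p b, ?_⟩
    rintro w (huw | hvw)
    · exact hpart huw hvb
    · exact (hpart hua hvw).symm.trans (hpart hua hvb)
  · rintro ⟨hdisj, i, hsub⟩
    exact not_compAdj_of_outNeighbors_disjoint_of_subset_part hD.1 hdisj hsub

/-- Let `D` be a multipartite tournament and let `u` and `v` be two non-sink
vertices belonging to the same partite set of `D`. Then `u` and `v` are not adjacent in
`C_{1,2}(D)` if and only if `N⁺(u) ∩ N⁺(v) = ∅` and `N⁺(u) ∪ N⁺(v) ⊆ X` for some partite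
set `X` of `D`. -/
theorem stmt1 {V ι : Type*} [Fintype V] [Fintype ι]
    (A : V → V → Prop) (p : V → ι) (hD : IsMultipartiteTournament A p)
    (u v : V) (huv : u ≠ v) (hsame : p u = p v)
    (hu : ∃ w, A u w) (hv : ∃ w, A v w) :
    ¬ (compGraph A).Adj u v ↔
      ({w | A u w} ∩ {w | A v w} = ∅ ∧
       ∃ i : ι, {w | A u w} ∪ {w | A v w} ⊆ {w | p w = i}) :=
  stmt1_general A p hD u v huv hsame hu hv
end

section
/- Let D be a digraph containing a directed cycle C of order ℓ for some ℓ ∈ {3,4}, and let X be a subset of V(D). Suppose that each vertex u in X − V(C) has two out-neighbors u₁ and u₂ on C such that both the (u₁,u₂)-section and the (u₂,u₁)-section of C have length at most 2. Then every vertex of X − V(C) is adjacent in C_{1,2}(D) to every other vertex of X. -/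
/-!
A vertex `u` off the cycle `C` sends arcs to two vertices `c i`, `c j` of `C` that split it into
sections of length at most 2. Hence every vertex of `C` is `c i`, `c j` or the successor of one
of them, so any out-neighbour of another vertex `v` off `C` is reached from `u` in at most two
steps; and every cycle vertex `c k` reaches `c i` or `c j` along `C` in one or two steps.
-/

section CycleArithmetic

variable {l : ℕ} {i j : ZMod l}

theorem ZMod.eq_or_eq_add_one_of_gaps_le_two (hl : l = 3 ∨ l = 4) (hij : i ≠ j)
    (hji : (j - i).val ≤ 2) (hij' : (i - j).val ≤ 2) (k : ZMod l) :
    k = i ∨ k = j ∨ k = i + 1 ∨ k = j + 1 := by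
  have key : ∀ i j k : ZMod l, i ≠ j → (j - i).val ≤ 2 → (i - j).val ≤ 2 →
      k = i ∨ k = j ∨ k = i + 1 ∨ k = j + 1 := by
    rcases hl with rfl | rfl <;> decide
  exact key i j k hij hji hij'

theorem ZMod.exists_eq_add_one_or_add_two_of_gaps_le_two (hl : l = 3 ∨ l = 4) (hij : i ≠ j)
    (hji : (j - i).val ≤ 2) (hij' : (i - j).val ≤ 2) (k : ZMod l) :
    ∃ m, (m = i ∨ m = j) ∧ (m = k + 1 ∨ m = k + 2) := by
  have key : ∀ i j k : ZMod l, i ≠ j → (j - i).val ≤ 2 → (i - j).val ≤ 2 →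
      ∃ m, (m = i ∨ m = j) ∧ (m = k + 1 ∨ m = k + 2) := by
    rcases hl with rfl | rfl <;> decide
  exact key i j k hij hji hij'

theorem ZMod.add_one_ne_self (hl : l = 3 ∨ l = 4) (k : ZMod l) : k + 1 ≠ k :=
  add_ne_left.mpr (by rcases hl with rfl | rfl <;> decide)

theorem ZMod.add_two_ne_self (hl : l = 3 ∨ l = 4) (k : ZMod l) : k + 2 ≠ k :=
  add_ne_left.mpr (by rcases hl with rfl | rfl <;> decide)

end CycleArithmetic

section CompAdj

variable {V : Type*} {A : V → V → Prop} {u v w z : V}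

theorem compAdj_of_common_out (huv : u ≠ v) (hwu : w ≠ u) (hwv : w ≠ v) (hu : A u w)
    (hv : A v w) : CompAdj A u v :=
  ⟨huv, w, hwu, hwv, Or.inl ⟨hu, Or.inl hv⟩⟩

theorem compAdj_of_arc_of_two_path (huv : u ≠ v) (hwu : w ≠ u) (hwv : w ≠ v) (hu : A u w)
    (hzu : z ≠ u) (hvz : A v z) (hzw : A z w) : CompAdj A u v :=
  ⟨huv, w, hwu, hwv, Or.inl ⟨hu, Or.inr ⟨z, hzu, hvz, hzw⟩⟩⟩

end CompAdj

section DirectedCycle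

variable {V : Type*} {A : V → V → Prop} {l : ℕ} {c : ZMod l → V} {u : V} {i j : ZMod l}

theorem compAdj_of_out_neighbor_on_cycle (hl : l = 3 ∨ l = 4)
    (hcyc : ∀ i : ZMod l, A (c i) (c (i + 1))) (hcu : ∀ k, c k ≠ u) (hij : i ≠ j)
    (hui : A u (c i)) (huj : A u (c j))
    (hji : (j - i).val ≤ 2) (hij' : (i - j).val ≤ 2) {v : V} (hvu : v ≠ u)
    (hvc : ∀ k, c k ≠ v) {k : ZMod l} (hvk : A v (c k)) : CompAdj A v u := by
  rcases ZMod.eq_or_eq_add_one_of_gaps_le_two hl hij hji hij' k with rfl | rfl | rfl | rfl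
  · exact compAdj_of_common_out hvu (hvc _) (hcu _) hvk hui
  · exact compAdj_of_common_out hvu (hvc _) (hcu _) hvk huj
  · exact compAdj_of_arc_of_two_path hvu (hvc _) (hcu _) hvk (hvc i) hui (hcyc i)
  · exact compAdj_of_arc_of_two_path hvu (hvc _) (hcu _) hvk (hvc j) huj (hcyc j)

theorem compAdj_cycle_vertex (hl : l = 3 ∨ l = 4) (hinj : Function.Injective c)
    (hcyc : ∀ i : ZMod l, A (c i) (c (i + 1))) (hcu : ∀ k, c k ≠ u) (hij : i ≠ j)
    (hui : A u (c i)) (huj : A u (c j)) (hji : (j - i).val ≤ 2) (hij' : (i - j).val ≤ 2)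
    (k : ZMod l) : CompAdj A u (c k) := by
  obtain ⟨m, hm, hmk⟩ := ZMod.exists_eq_add_one_or_add_two_of_gaps_le_two hl hij hji hij' k
  have hum : A u (c m) := by rcases hm with rfl | rfl <;> assumption
  rcases hmk with rfl | rfl
  · exact compAdj_of_common_out (hcu k).symm (hcu _)
      (hinj.ne (ZMod.add_one_ne_self hl k)) hum (hcyc k)
  · have hpath : A (c (k + 1)) (c (k + 2)) := by
      simpa only [add_assoc, one_add_one_eq_two] using hcyc (k + 1)
    exact compAdj_of_arc_of_two_path (hcu k).symm (hcu _)
      (hinj.ne (ZMod.add_two_ne_self hl k)) hum (hcu _) (hcyc k) hpath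

end DirectedCycle

theorem stmt16_general {V : Type*} (A : V → V → Prop)
    (l : ℕ) (hl : l = 3 ∨ l = 4) (c : ZMod l → V) (hinj : Function.Injective c)
    (hcyc : ∀ i : ZMod l, A (c i) (c (i + 1)))
    (X : Set V)
    (hX : ∀ u ∈ X, (∀ i, c i ≠ u) →
      ∃ i j : ZMod l, i ≠ j ∧ A u (c i) ∧ A u (c j) ∧ (j - i).val ≤ 2 ∧ (i - j).val ≤ 2) :
    ∀ u ∈ X, (∀ i, c i ≠ u) → ∀ v ∈ X, v ≠ u → (compGraph A).Adj u v := by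
  intro u hu hcu v hv hvu
  obtain ⟨i, j, hij, hui, huj, hji, hij'⟩ := hX u hu hcu
  by_cases hvc : ∀ k, c k ≠ v
  · obtain ⟨k, -, -, hvk, -⟩ := hX v hv hvc
    exact SimpleGraph.Adj.symm (G := compGraph A)
      (compAdj_of_out_neighbor_on_cycle hl hcyc hcu hij hui huj hji hij' hvu hvc hvk)
  · obtain ⟨k, rfl⟩ := not_forall_not.mp hvc
    exact compAdj_cycle_vertex hl hinj hcyc hcu hij hui huj hji hij' k

/-- Let `D` be a digraph containing a directed cycle `C` of order
`ℓ ∈ {3,4}` (with vertices `c 0, c 1, …` in cyclic order), and let `X ⊆ V(D)`. Suppose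
each vertex `u ∈ X − V(C)` has two out-neighbors `c i`, `c j` on `C` such that both the
`(c i, c j)`-section and the `(c j, c i)`-section of `C` have length at most 2. Then every
vertex of `X − V(C)` is adjacent in `C_{1,2}(D)` to every other vertex of `X`. -/
theorem stmt16 {V : Type*} [Fintype V] (A : V → V → Prop) (hA : Irreflexive A)
    (l : ℕ) (hl : l = 3 ∨ l = 4) (c : ZMod l → V) (hinj : Function.Injective c)
    (hcyc : ∀ i : ZMod l, A (c i) (c (i + 1)))
    (X : Set V)
    (hX : ∀ u ∈ X, (∀ i, c i ≠ u) →
      ∃ i j : ZMod l, i ≠ j ∧ A u (c i) ∧ A u (c j) ∧ (j - i).val ≤ 2 ∧ (i - j).val ≤ 2) :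
    ∀ u ∈ X, (∀ i, c i ≠ u) → ∀ v ∈ X, v ≠ u → (compGraph A).Adj u v :=
  stmt16_general A l hl c hinj hcyc X hX
end
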